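/- (Dyson's lemma.) Let v be an admissible potential with range R₀, let (a,u) be an even-wave scattering solution for v, and let R > R₀. Then for all s ≥ R, t ≥ R and every continuously differentiable function φ : ℝ → ℝ, one has ∫_{−s}^{t} ( φ'(x)² + (1/2)·v(x)·φ(x)² ) dx ≥ (1/(R − a))·( φ(R)² + φ(−R)² ). -/

import Mathlib

open MeasureTheory Real

noncomputable section

/-- An admissible potential with range `R₀`. -/
structure AdmissiblePotential (v : ℝ → ℝ) (R₀ : ℝ) : Prop where
  range_pos : 0 < R₀
  cont : Continuous v
  nonneg : ∀ x, 0 ≤ v x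
  even : ∀ x, v (-x) = v x
  vanish : ∀ x, R₀ < |x| → v x = 0

/-- An even-wave scattering solution `(a, u)` for the potential `v`. -/
structure EvenScatteringSolution (v : ℝ → ℝ) (R₀ : ℝ) (a : ℝ) (u : ℝ → ℝ) : Prop where
  smooth : ContDiff ℝ 2 u
  even : ∀ x, u (-x) = u x
  pos : ∀ x, 0 < u x
  ode : ∀ x, deriv (deriv u) x = (1 / 2) * v x * u x
  linear : ∀ x, R₀ ≤ x → u x = x - a

/-!
Ground-state substitution: if `u > 0` solves `u'' = w u`, then
`φ'² + w φ² = (φ' - φ u'/u)² + (φ² u'/u)'`, so the energy of `φ` on `[-R, R]` is at least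
the boundary term `[φ² u'/u]_{-R}^{R}`. Outside the range of `v` we have `u = x - a`, so this
boundary term is `(φ(R)² + φ(-R)²)/(R - a)`; enlarging the interval only adds a nonnegative
integrand.
-/

theorem hasDerivAt_sq_mul_div_of_deriv_eq_mul {φ u u' : ℝ → ℝ} {φ' w x : ℝ}
    (hφ : HasDerivAt φ φ' x) (hu : HasDerivAt u (u' x) x) (hu' : HasDerivAt u' (w * u x) x)
    (hux : u x ≠ 0) :
    HasDerivAt (fun y => φ y ^ 2 * u' y / u y)
      (φ' ^ 2 + w * φ x ^ 2 - (φ' - φ x * u' x / u x) ^ 2) x := by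
  refine (((hφ.fun_pow 2).fun_mul hu').fun_div hu hux).congr_deriv ?_
  field_simp
  ring

theorem sub_le_integral_of_deriv_eq_mul {φ φ' u u' w : ℝ → ℝ} {α β : ℝ} (hαβ : α ≤ β)
    (hφ : ∀ x ∈ Set.Icc α β, HasDerivAt φ (φ' x) x)
    (hu : ∀ x ∈ Set.Icc α β, HasDerivAt u (u' x) x)
    (hu' : ∀ x ∈ Set.Icc α β, HasDerivAt u' (w x * u x) x)
    (hu0 : ∀ x ∈ Set.Icc α β, u x ≠ 0)
    (hint : IntegrableOn (fun x => φ' x ^ 2 + w x * φ x ^ 2) (Set.Icc α β)) :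
    φ β ^ 2 * u' β / u β - φ α ^ 2 * u' α / u α ≤
      ∫ x in α..β, (φ' x ^ 2 + w x * φ x ^ 2) := by
  have hg : ∀ x ∈ Set.Icc α β, HasDerivAt (fun y => φ y ^ 2 * u' y / u y)
      (φ' x ^ 2 + w x * φ x ^ 2 - (φ' x - φ x * u' x / u x) ^ 2) x := fun x hx =>
    hasDerivAt_sq_mul_div_of_deriv_eq_mul (hφ x hx) (hu x hx) (hu' x hx) (hu0 x hx)
  refine intervalIntegral.sub_le_integral_of_hasDeriv_right_of_le hαβ
    (fun x hx => (hg x hx).continuousAt.continuousWithinAt)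
    (fun x hx => (hg x (Set.Ioo_subset_Icc_self hx)).hasDerivWithinAt) hint fun x _ => ?_
  linarith [sq_nonneg (φ' x - φ x * u' x / u x)]

namespace EvenScatteringSolution

variable {v : ℝ → ℝ} {R₀ a : ℝ} {u : ℝ → ℝ}

theorem hasDerivAt (hu : EvenScatteringSolution v R₀ a u) (x : ℝ) :
    HasDerivAt u (deriv u x) x :=
  (hu.smooth.differentiable (by norm_num) x).hasDerivAt

theorem hasDerivAt_deriv (hu : EvenScatteringSolution v R₀ a u) (x : ℝ) :
    HasDerivAt (deriv u) (1 / 2 * v x * u x) x := by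
  have hu' : ContDiff ℝ 1 (deriv u) := (contDiff_succ_iff_deriv (n := 1)).mp hu.smooth |>.2.2
  simpa only [hu.ode x] using (hu'.differentiable one_ne_zero x).hasDerivAt

theorem deriv_neg (hu : EvenScatteringSolution v R₀ a u) (x : ℝ) :
    deriv u (-x) = -deriv u x := by
  have h := deriv_comp_neg (f := u) (x := x)
  simp only [hu.even] at h
  linarith

theorem deriv_eq_one {x : ℝ} (hu : EvenScatteringSolution v R₀ a u) (hx : R₀ < x) :
    deriv u x = 1 := by
  have hlin : u =ᶠ[nhds x] fun y => y - a :=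
    Filter.eventually_of_mem (isOpen_Ioi.mem_nhds hx) fun y hy => hu.linear y (le_of_lt hy)
  rw [hlin.deriv_eq]
  simp

end EvenScatteringSolution

/-- Dyson's lemma in one dimension. -/
theorem statement_5 (v : ℝ → ℝ) (R₀ a : ℝ) (u : ℝ → ℝ)
    (hv : AdmissiblePotential v R₀) (hu : EvenScatteringSolution v R₀ a u)
    (R : ℝ) (hR : R₀ < R) :
    ∀ s t : ℝ, R ≤ s → R ≤ t → ∀ φ : ℝ → ℝ, ContDiff ℝ 1 φ →
      (1 / (R - a)) * ((φ R) ^ 2 + (φ (-R)) ^ 2) ≤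
        ∫ x in Set.Icc (-s) t, ((deriv φ x) ^ 2 + (1 / 2) * v x * (φ x) ^ 2) := by
  intro s t hs ht φ hφ
  set f := fun x => deriv φ x ^ 2 + 1 / 2 * v x * φ x ^ 2
  have hf : Continuous f :=
    ((contDiff_one_iff_deriv.mp hφ).2.pow 2).add
      ((continuous_const.mul hv.cont).mul (hφ.continuous.pow 2))
  have hf0 : ∀ x, 0 ≤ f x := fun x => by have := hv.nonneg x; positivity
  have huR : u R = R - a := hu.linear R hR.le
  have hRa : 0 < R - a := huR ▸ hu.pos R
  have hRR : -R ≤ R := by linarith [hv.range_pos]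
  calc 1 / (R - a) * (φ R ^ 2 + φ (-R) ^ 2)
      = φ R ^ 2 * deriv u R / u R - φ (-R) ^ 2 * deriv u (-R) / u (-R) := by
        rw [hu.even, hu.deriv_neg, hu.deriv_eq_one hR, huR]
        field_simp
        ring
    _ ≤ ∫ x in -R..R, f x :=
        sub_le_integral_of_deriv_eq_mul hRR
          (fun x _ => (hφ.differentiable one_ne_zero x).hasDerivAt)
          (fun x _ => hu.hasDerivAt x) (fun x _ => hu.hasDerivAt_deriv x)
          (fun x _ => (hu.pos x).ne') hf.integrableOn_Icc
    _ = ∫ x in Set.Icc (-R) R, f x := by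
        rw [intervalIntegral.integral_of_le hRR, integral_Icc_eq_integral_Ioc]
    _ ≤ ∫ x in Set.Icc (-s) t, f x :=
        setIntegral_mono_set hf.integrableOn_Icc (Filter.Eventually.of_forall hf0)
          (Filter.Eventually.of_forall (Set.Icc_subset_Icc (by linarith) ht))
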